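/- An up-down word w = w₁w₂⋯w_ℓ avoids the vincular pattern 1-23 (no indices j* < j with w_{j*} < w_j < w_{j+1} and w_j, w_{j+1} adjacent) if and only if b₁ ≥ b₂ ≥ ⋯ ≥ b_{⌊ℓ/2⌋}, i.e., the first ⌊ℓ/2⌋ bottom elements are weakly decreasing. -/
import Mathlib


/-- `w` is an up-down word: `w₀ < w₁ > w₂ < w₃ > ⋯` (0-indexed). -/
def IsUpDown {l k : ℕ} (w : Fin l → Fin k) : Prop :=
  ∀ j : ℕ, ∀ h : j + 1 < l,
    (j % 2 = 0 → w ⟨j, by omega⟩ < w ⟨j + 1, h⟩) ∧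
    (j % 2 = 1 → w ⟨j + 1, h⟩ < w ⟨j, by omega⟩)

/-- `w` avoids the vincular pattern 1-23: no `a < j` with
`w a < w j < w (j+1)` (the last two letters adjacent). -/
def AvoidsV1_23 {l k : ℕ} (w : Fin l → Fin k) : Prop :=
  ∀ a j : ℕ, ∀ haj : a < j, ∀ h : j + 1 < l,
    ¬ (w ⟨a, by omega⟩ < w ⟨j, by omega⟩ ∧ w ⟨j, by omega⟩ < w ⟨j + 1, h⟩)

/-- An up-down word avoids the vincular pattern 1-23 iff its first `⌊ℓ/2⌋`
bottom elements are weakly decreasing. -/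
theorem stmt_15 (l k : ℕ) (w : Fin l → Fin k) (hud : IsUpDown w) :
    AvoidsV1_23 w ↔
      (∀ m₁ m₂ : ℕ, ∀ hm : m₁ ≤ m₂, ∀ h₂ : m₂ < l / 2,
        w ⟨2 * m₂, by omega⟩ ≤ w ⟨2 * m₁, by omega⟩) := by
  constructor
  · intro hav m₁ m₂ hm h₂
    rcases eq_or_lt_of_le hm with rfl | hlt
    · exact le_refl _
    · by_contra hcon
      push_neg at hcon
      exact hav (2*m₁) (2*m₂) (by omega) (by omega)
        ⟨hcon, (hud (2*m₂) (by omega)).1 (by omega)⟩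
  · rintro hdec a j haj h ⟨h1, h2⟩
    have hje : j % 2 = 0 := by
      rcases Nat.mod_two_eq_zero_or_one j with h0 | h1
      · exact h0
      · exact absurd h2 (not_lt.2 ((hud j h).2 h1).le)
    obtain ⟨m₂, rfl⟩ : ∃ m, j = 2*m := ⟨j/2, by omega⟩
    have hm2 : m₂ < l / 2 := by omega
    rcases Nat.mod_two_eq_zero_or_one a with ha | ha
    · obtain ⟨m₁, rfl⟩ : ∃ m, a = 2*m := ⟨a/2, by omega⟩
      exact absurd h1 (not_lt.2 (hdec m₁ m₂ (by omega) hm2))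
    · obtain ⟨m₁, rfl⟩ : ∃ m, a = 2*m + 1 := ⟨a/2, by omega⟩
      have hle : m₁ + 1 ≤ m₂ := by omega
      have h3 : w ⟨2*m₁+1+1, by omega⟩ < w ⟨2*m₁+1, by omega⟩ :=
        (hud (2*m₁+1) (by omega)).2 (by omega)
      have h4 : w ⟨2*m₂, by omega⟩ ≤ w ⟨2*(m₁+1), by omega⟩ :=
        hdec (m₁+1) m₂ hle hm2
      have heq : (⟨2*(m₁+1), by omega⟩ : Fin l) = ⟨2*m₁+1+1, by omega⟩ := by
        apply Fin.ext
        show 2*(m₁+1) = 2*m₁+1+1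
        omega
      exact absurd h1 (not_lt.2 ((h4.trans (congrArg w heq).le).trans h3.le))
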